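/- arXiv:2104.02095 — 2 statements merged into one kernel-verified Lean document; each statement's English description precedes it below -/
import Mathlib

section
/- Let g : [0,1] → [0,1] be defined by g(x) = 2x for x < 1/2 and g(x) = 2(1 − x) for x ≥ 1/2, let g_s denote the s-fold composition g ∘ g ∘ ⋯ ∘ g, and for a positive integer m let f_m(x) = x − ∑_{s=1}^{m} g_s(x)/2^{2s}. Then |f_m(x) − x²| ≤ 2^{−2m−2} for all x ∈ [0,1]. -/
open scoped BigOperators

noncomputable section

/-- The triangle wave `g : [0,1] → [0,1]`, `g x = 2x` for `x < 1/2` and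
`g x = 2(1-x)` for `x ≥ 1/2`. -/
def triangleWave (x : ℝ) : ℝ := if x < 1 / 2 then 2 * x else 2 * (1 - x)

lemma triangleWave_key (x : ℝ) :
    (x - x ^ 2) - triangleWave x / 4
      = (triangleWave x - (triangleWave x) ^ 2) / 4 := by
  unfold triangleWave; split_ifs <;> ring

lemma triangleWave_mem {x : ℝ} (hx : x ∈ Set.Icc (0 : ℝ) 1) :
    triangleWave x ∈ Set.Icc (0 : ℝ) 1 := by
  obtain ⟨h0, h1⟩ := hx
  unfold triangleWave
  split_ifs with h <;> constructor <;> linarith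

lemma triangleWave_iter_mem (s : ℕ) {x : ℝ} (hx : x ∈ Set.Icc (0 : ℝ) 1) :
    triangleWave^[s] x ∈ Set.Icc (0 : ℝ) 1 := by
  induction s with
  | zero => simpa using hx
  | succ n ih => rw [Function.iterate_succ_apply']; exact triangleWave_mem ih

lemma triangleWave_tele (m : ℕ) (x : ℝ) :
    x - (∑ s ∈ Finset.Icc 1 m, triangleWave^[s] x / 2 ^ (2 * s)) - x ^ 2
      = (triangleWave^[m] x - (triangleWave^[m] x) ^ 2) / 2 ^ (2 * m) := by
  induction m with
  | zero => simp
  | succ n ih =>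
    rw [Finset.sum_Icc_succ_top (by omega : 1 ≤ n + 1),
      Function.iterate_succ_apply']
    have key := triangleWave_key (triangleWave^[n] x)
    have hp : (2 : ℝ) ^ (2 * (n + 1)) = 4 * 2 ^ (2 * n) := by
      rw [mul_add, pow_add]; ring
    rw [hp]
    have hne : (2 : ℝ) ^ (2 * n) ≠ 0 := by positivity
    field_simp
    field_simp at ih key
    nlinarith [ih, key]

/-- `f_m(x) = x - ∑_{s=1}^m g_s(x)/2^{2s}` approximates `x²` on `[0,1]` with
error `2^{-2m-2}`, where `g_s` is the `s`-fold iterate of the triangle wave. -/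
theorem abs_sub_sq_le_of_triangleWave (m : ℕ) (hm : 0 < m) (x : ℝ)
    (hx : x ∈ Set.Icc (0 : ℝ) 1) :
    |(x - ∑ s ∈ Finset.Icc 1 m, triangleWave^[s] x / 2 ^ (2 * s)) - x ^ 2|
      ≤ ((2 : ℝ) ^ (2 * m + 2))⁻¹ := by
  rw [triangleWave_tele]
  obtain ⟨h0, h1⟩ := triangleWave_iter_mem m hx
  set y := triangleWave^[m] x
  have hb : |y - y ^ 2| ≤ 1 / 4 := by
    rw [abs_le]; constructor <;> nlinarith [sq_nonneg (y - 1 / 2)]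
  have hpos : (0 : ℝ) < 2 ^ (2 * m) := by positivity
  rw [abs_div, abs_of_pos hpos, inv_eq_one_div,
    div_le_div_iff₀ hpos (by positivity), one_mul, pow_add]
  nlinarith [hb, hpos]
end
end

section
/- For every positive integer m there exists a neural network Mult_m with the absolute value activation a(x) = |x|, of depth L = 2m + 3, input dimension p_0 = 3, output dimension p_{L+1} = 1 and maximal width ‖p‖_∞ = 3m + 2, such that |Mult_m(1, x, y) − x·y| ≤ 3 · 2^{−2m−3} for all x, y ∈ [0,1], and such that the product of the entrywise absolute values of its weight matrices equals the row vector (3 ∑_{k=1}^{m} (2^k − 1)/2^{2k}, 2 − 2^{−m}, 2 − 2^{−m}). -/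
open scoped BigOperators
open Matrix

noncomputable section

/-- A bias-free neural network with width function `p`: for each `i`,
a real weight matrix of size `p (i+1) × p i`. -/
structure NN (p : ℕ → ℕ) where
  W : ∀ i : ℕ, Matrix (Fin (p (i + 1))) (Fin (p i)) ℝ

namespace NN

variable {p : ℕ → ℕ}

/-- Forward pass: output after multiplying by `W i` (activation `α` applied
between consecutive matrices, but not after the last one). -/
def pre (α : ℝ → ℝ) (f : NN p) : (i : ℕ) → (Fin (p 0) → ℝ) → (Fin (p (i + 1)) → ℝ)
  | 0, x => f.W 0 *ᵥ x
  | (i + 1), x => f.W (i + 1) *ᵥ fun j => α (f.pre α i x j)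

/-- Evaluation of the network of depth `L` (i.e. using matrices `W 0, …, W L`). -/
def eval (α : ℝ → ℝ) (f : NN p) (L : ℕ) (x : Fin (p 0) → ℝ) : Fin (p (L + 1)) → ℝ :=
  f.pre α L x

/-- The product `|W i| ⬝ |W (i-1)| ⬝ ⋯ ⬝ |W 0|` of the entrywise absolute values of the
weight matrices. -/
def absProd (f : NN p) : (i : ℕ) → Matrix (Fin (p (i + 1))) (Fin (p 0)) ℝ
  | 0 => Matrix.of fun j k => |f.W 0 j k|
  | (i + 1) => (Matrix.of fun j k => |f.W (i + 1) j k|) * f.absProd i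

/-- `‖f‖_×`: the ℓ¹ norm (sum of absolute values of all entries) of the matrix
`|W L| ⬝ ⋯ ⬝ |W 0|`. -/
def normTimes (f : NN p) (L : ℕ) : ℝ :=
  ∑ j, ∑ k, |f.absProd L j k|

end NN

/-- The absolute value activation function. -/
def absAct : ℝ → ℝ := fun x => |x|


namespace MultNet

/-! ### the tent map and the approximation of the square function -/

def T : ℝ → ℝ := fun s => |1 - 2 * s|

lemma T_nonneg (s : ℝ) : 0 ≤ T s := abs_nonneg _

lemma T_mem {s : ℝ} (h0 : 0 ≤ s) (h1 : s ≤ 1) : 0 ≤ T s ∧ T s ≤ 1 :=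
  ⟨abs_nonneg _, abs_le.2 ⟨by linarith, by linarith⟩⟩

lemma T_one_sub (s : ℝ) : T (1 - s) = T s := by
  unfold T
  rw [← abs_neg]
  ring_nf

lemma iterT_nonneg (k : ℕ) (t : ℝ) : 0 ≤ T^[k+1] t := by
  rw [Function.iterate_succ_apply']
  exact abs_nonneg _

lemma T_iter_g (k : ℕ) (t : ℝ) : T^[k+1] (1 - T t) = T^[k+2] t := by
  induction k with
  | zero =>
    rw [Function.iterate_one, T_one_sub]
    rfl
  | succ n ih =>
    rw [Function.iterate_succ_apply', ih]
    exact (Function.iterate_succ_apply' T _ t).symm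

def G (t : ℝ) (n : ℕ) : ℝ := t + ∑ k ∈ Finset.range n, T^[k+1] t / 4^(k+1)

def Cc (n : ℕ) : ℝ := ∑ k ∈ Finset.range n, ((4:ℝ)^(k+1))⁻¹

def F (t : ℝ) (n : ℕ) : ℝ := G t n - Cc n

lemma G_zero (t : ℝ) : G t 0 = t := by simp [G]

lemma G_nonneg {t : ℝ} (h : 0 ≤ t) (n : ℕ) : 0 ≤ G t n := by
  unfold G
  have : 0 ≤ ∑ k ∈ Finset.range n, T^[k+1] t / 4^(k+1) :=
    Finset.sum_nonneg fun k _ => div_nonneg (iterT_nonneg k t) (by positivity)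
  linarith

lemma G_succ (t : ℝ) (n : ℕ) : G t (n+1) = G t n + T^[n+1] t / 4^(n+1) := by
  unfold G
  rw [Finset.sum_range_succ]
  ring

lemma F_rec (t : ℝ) (n : ℕ) :
    F t (n+1) = t^2 - (1 - T t)^2/4 + F (1 - T t) n / 4 := by
  have hG : G t (n+1) = t + T t / 4 + (G (1 - T t) n - (1 - T t)) / 4 := by
    unfold G
    rw [Finset.sum_range_succ']
    have : ∀ k ∈ Finset.range n, T^[k+1+1] t / (4:ℝ)^(k+1+1)
        = (T^[k+1] (1 - T t) / 4^(k+1)) / 4 := by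
      intro k _
      rw [T_iter_g, pow_succ]
      ring_nf
    rw [Finset.sum_congr rfl this, ← Finset.sum_div]
    rw [Function.iterate_one]
    ring
  have hC : Cc (n+1) = (4:ℝ)⁻¹ + Cc n / 4 := by
    unfold Cc
    rw [Finset.sum_range_succ']
    have : ∀ k ∈ Finset.range n, ((4:ℝ)^(k+1+1))⁻¹ = ((4:ℝ)^(k+1))⁻¹ / 4 := by
      intro k _
      rw [pow_succ]
      ring_nf
    rw [Finset.sum_congr rfl this, ← Finset.sum_div]
    ring
  have h2 : T t ^ 2 = (1 - 2*t)^2 := sq_abs _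
  unfold F
  rw [hG, hC]
  linear_combination h2 / 4

lemma F_bounds (n : ℕ) : ∀ t : ℝ, 0 ≤ t → t ≤ 1 →
    t^2 ≤ F t n ∧ F t n ≤ t^2 + ((4:ℝ)^(n+1))⁻¹ := by
  induction n with
  | zero =>
    intro t h0 h1
    have : F t 0 = t := by unfold F G Cc; simp
    rw [this]
    constructor
    · nlinarith
    · nlinarith [sq_nonneg (t - 1/2)]
  | succ n ih =>
    intro t h0 h1
    have hT := T_mem h0 h1
    have hg0 : (0:ℝ) ≤ 1 - T t := by linarith [hT.2]
    have hg1 : 1 - T t ≤ 1 := by linarith [hT.1]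
    have hih := ih (1 - T t) hg0 hg1
    rw [F_rec]
    have hpow : ((4:ℝ)^(n+1))⁻¹ / 4 = ((4:ℝ)^(n+1+1))⁻¹ := by
      rw [pow_succ]
      field_simp
      ring
    constructor
    · nlinarith [hih.1]
    · nlinarith [hih.2, hpow]

/-! ### sparse rows -/

def rw5 (c0 c1 c2 c3 c4 : ℝ) : ℕ → ℝ := fun k =>
  if k = 0 then c0 else if k = 1 then c1 else if k = 2 then c2
  else if k = 3 then c3 else if k = 4 then c4 else 0

lemma rw5_zero (k : ℕ) : rw5 0 0 0 0 0 k = 0 := by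
  unfold rw5; split_ifs <;> rfl

lemma abs_rw5 (c0 c1 c2 c3 c4 : ℝ) (k : ℕ) :
    |rw5 c0 c1 c2 c3 c4 k| = rw5 |c0| |c1| |c2| |c3| |c4| k := by
  unfold rw5; split_ifs <;> simp

lemma sum_ind {n : ℕ} (x : Fin n → ℝ) {i : ℕ} (c : ℝ) (h : i < n) :
    ∑ k : Fin n, (if (k : ℕ) = i then c else 0) * x k = c * x ⟨i, h⟩ := by
  rw [Finset.sum_eq_single (⟨i, h⟩ : Fin n)]
  · simp
  · intro b _ hb
    have : (b : ℕ) ≠ i := fun hh => hb (Fin.ext hh)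
    simp [this]
  · simp

lemma sum_ind' {n : ℕ} (x : Fin n → ℝ) {i : ℕ} (c : ℝ) (h : n ≤ i) :
    ∑ k : Fin n, (if (k : ℕ) = i then c else 0) * x k = 0 := by
  apply Finset.sum_eq_zero
  intro k _
  have : (k : ℕ) ≠ i := by omega
  simp [this]

lemma rw5_split (c0 c1 c2 c3 c4 : ℝ) (k : ℕ) :
    rw5 c0 c1 c2 c3 c4 k =
      (if k = 0 then c0 else 0) + (if k = 1 then c1 else 0) + (if k = 2 then c2 else 0)
        + (if k = 3 then c3 else 0) + (if k = 4 then c4 else 0) := by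
  unfold rw5; split_ifs <;> simp_all

lemma sum_rw5 {n : ℕ} (h : 5 ≤ n) (x : Fin n → ℝ) (c0 c1 c2 c3 c4 : ℝ) :
    ∑ k : Fin n, rw5 c0 c1 c2 c3 c4 (k : ℕ) * x k
      = c0 * x ⟨0, by omega⟩ + c1 * x ⟨1, by omega⟩ + c2 * x ⟨2, by omega⟩
        + c3 * x ⟨3, by omega⟩ + c4 * x ⟨4, by omega⟩ := by
  simp only [rw5_split, add_mul, Finset.sum_add_distrib]
  rw [sum_ind x c0 (by omega), sum_ind x c1 (by omega), sum_ind x c2 (by omega),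
    sum_ind x c3 (by omega), sum_ind x c4 (by omega)]

lemma sum_rw5_3 {n : ℕ} (h : n = 3) (x : Fin n → ℝ) (c0 c1 c2 c3 c4 : ℝ) :
    ∑ k : Fin n, rw5 c0 c1 c2 c3 c4 (k : ℕ) * x k
      = c0 * x ⟨0, by omega⟩ + c1 * x ⟨1, by omega⟩ + c2 * x ⟨2, by omega⟩ := by
  simp only [rw5_split, add_mul, Finset.sum_add_distrib]
  rw [sum_ind x c0 (by omega), sum_ind x c1 (by omega), sum_ind x c2 (by omega),
    sum_ind' x c3 (by omega), sum_ind' x c4 (by omega)]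
  ring

lemma finval {n a : ℕ} (h : a < n) : ((⟨a, h⟩ : Fin n) : ℕ) = a := rfl

/-! ### the network -/

def pfun (m : ℕ) : ℕ → ℕ := fun i => if i = 0 then 3 else if i = 2*m+4 then 1 else 3*m+2

lemma pfun_zero (m : ℕ) : pfun m 0 = 3 := rfl

lemma pfun_mid (m : ℕ) {i : ℕ} (h1 : 1 ≤ i) (h2 : i ≤ 2*m+3) : pfun m i = 3*m+2 := by
  unfold pfun; rw [if_neg (by omega), if_neg (by omega)]

lemma pfun_last (m : ℕ) : pfun m (2*m+4) = 1 := by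
  unfold pfun; rw [if_neg (by omega), if_pos rfl]

def S (m : ℕ) : ℝ := ∑ i ∈ Finset.Icc 1 m, ((2:ℝ)^i - 1)/2^(2*i)

lemma S_nonneg (m : ℕ) : 0 ≤ S m := by
  apply Finset.sum_nonneg
  intro i _
  have : (1:ℝ) ≤ 2^i := one_le_pow₀ (by norm_num)
  apply div_nonneg (by linarith) (by positivity)

def ent (m : ℕ) (i j k : ℕ) : ℝ :=
  if i = 0 then
    (if j = 0 then rw5 1 0 0 0 0 k
     else if j = 1 then rw5 0 (1/2) (1/2) 0 0 k
     else if j = 2 then rw5 0 (1/2) (-(1/2)) 0 0 k else rw5 0 0 0 0 0 k)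
  else if i ≤ m then
    (if j = 0 then rw5 1 0 0 0 0 k
     else if j = 1 then rw5 0 1 0 (((4:ℝ)^(i-1))⁻¹) 0 k
     else if j = 2 then rw5 0 0 1 0 (((4:ℝ)^(i-1))⁻¹) k
     else if j = 3 then (if i = 1 then rw5 (-1) 2 0 0 0 k else rw5 1 0 0 (-2) 0 k)
     else if j = 4 then (if i = 1 then rw5 (-1) 0 2 0 0 k else rw5 1 0 0 0 (-2) k)
     else rw5 0 0 0 0 0 k)
  else if i = m+1 then
    (if j = 0 then rw5 1 0 0 0 0 k
     else if j = 1 then rw5 0 1 0 (((4:ℝ)^m)⁻¹) 0 k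
     else if j = 2 then rw5 0 0 1 0 (((4:ℝ)^m)⁻¹) k
     else if j = 3 then rw5 (-1) 0 0 0 0 k
     else rw5 0 0 0 0 0 k)
  else if i ≤ 2*m+2 then
    (if j = 0 then rw5 1 0 0 0 0 k
     else if j = 1 then rw5 0 1 0 0 0 k
     else if j = 2 then rw5 0 0 1 0 0 k
     else if j = 3 then rw5 0 0 0 1 0 k else rw5 0 0 0 0 0 k)
  else
    (if j = 0 then rw5 (S m / 2) 1 (-1) (-(S m / 2)) 0 k else rw5 0 0 0 0 0 k)

def net (m : ℕ) : NN (pfun m) := ⟨fun i => Matrix.of fun j k => ent m i (j:ℕ) (k:ℕ)⟩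

/-! ### row selection lemmas -/

section entrows
variable (m : ℕ)

lemma ent00 : ∀ k, ent m 0 0 k = rw5 1 0 0 0 0 k := by
  intro k; unfold ent; rw [if_pos rfl, if_pos rfl]
lemma ent01 : ∀ k, ent m 0 1 k = rw5 0 (1/2) (1/2) 0 0 k := by
  intro k; unfold ent; rw [if_pos rfl, if_neg (by omega), if_pos rfl]
lemma ent02 : ∀ k, ent m 0 2 k = rw5 0 (1/2) (-(1/2)) 0 0 k := by
  intro k; unfold ent; rw [if_pos rfl, if_neg (by omega), if_neg (by omega), if_pos rfl]
lemma ent0big {j : ℕ} (hj : 3 ≤ j) : ∀ k, ent m 0 j k = rw5 0 0 0 0 0 k := by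
  intro k; unfold ent
  rw [if_pos rfl, if_neg (by omega), if_neg (by omega), if_neg (by omega)]

variable {i : ℕ}

lemma entT0 (h1 : 1 ≤ i) (h2 : i ≤ m) : ∀ k, ent m i 0 k = rw5 1 0 0 0 0 k := by
  intro k; unfold ent; rw [if_neg (by omega), if_pos h2, if_pos rfl]
lemma entT1 (h1 : 1 ≤ i) (h2 : i ≤ m) :
    ∀ k, ent m i 1 k = rw5 0 1 0 (((4:ℝ)^(i-1))⁻¹) 0 k := by
  intro k; unfold ent; rw [if_neg (by omega), if_pos h2, if_neg (by omega), if_pos rfl]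
lemma entT2 (h1 : 1 ≤ i) (h2 : i ≤ m) :
    ∀ k, ent m i 2 k = rw5 0 0 1 0 (((4:ℝ)^(i-1))⁻¹) k := by
  intro k; unfold ent
  rw [if_neg (by omega), if_pos h2, if_neg (by omega), if_neg (by omega), if_pos rfl]
lemma entT3 (h1 : 1 ≤ i) (h2 : i ≤ m) :
    ∀ k, ent m i 3 k = (if i = 1 then rw5 (-1) 2 0 0 0 k else rw5 1 0 0 (-2) 0 k) := by
  intro k; unfold ent
  rw [if_neg (by omega), if_pos h2, if_neg (by omega), if_neg (by omega), if_neg (by omega),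
    if_pos rfl]
lemma entT4 (h1 : 1 ≤ i) (h2 : i ≤ m) :
    ∀ k, ent m i 4 k = (if i = 1 then rw5 (-1) 0 2 0 0 k else rw5 1 0 0 0 (-2) k) := by
  intro k; unfold ent
  rw [if_neg (by omega), if_pos h2, if_neg (by omega), if_neg (by omega), if_neg (by omega),
    if_neg (by omega), if_pos rfl]
lemma entTbig (h1 : 1 ≤ i) (h2 : i ≤ m) {j : ℕ} (hj : 5 ≤ j) :
    ∀ k, ent m i j k = rw5 0 0 0 0 0 k := by
  intro k; unfold ent
  rw [if_neg (by omega), if_pos h2, if_neg (by omega), if_neg (by omega), if_neg (by omega),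
    if_neg (by omega), if_neg (by omega)]

lemma entM0 : ∀ k, ent m (m+1) 0 k = rw5 1 0 0 0 0 k := by
  intro k; unfold ent
  rw [if_neg (by omega), if_neg (by omega), if_pos rfl, if_pos rfl]
lemma entM1 : ∀ k, ent m (m+1) 1 k = rw5 0 1 0 (((4:ℝ)^m)⁻¹) 0 k := by
  intro k; unfold ent
  rw [if_neg (by omega), if_neg (by omega), if_pos rfl, if_neg (by omega), if_pos rfl]
lemma entM2 : ∀ k, ent m (m+1) 2 k = rw5 0 0 1 0 (((4:ℝ)^m)⁻¹) k := by
  intro k; unfold ent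
  rw [if_neg (by omega), if_neg (by omega), if_pos rfl, if_neg (by omega), if_neg (by omega),
    if_pos rfl]
lemma entM3 : ∀ k, ent m (m+1) 3 k = rw5 (-1) 0 0 0 0 k := by
  intro k; unfold ent
  rw [if_neg (by omega), if_neg (by omega), if_pos rfl, if_neg (by omega), if_neg (by omega),
    if_neg (by omega), if_pos rfl]
lemma entMbig {j : ℕ} (hj : 4 ≤ j) : ∀ k, ent m (m+1) j k = rw5 0 0 0 0 0 k := by
  intro k; unfold ent
  rw [if_neg (by omega), if_neg (by omega), if_pos rfl, if_neg (by omega), if_neg (by omega),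
    if_neg (by omega), if_neg (by omega)]

lemma entI0 (h1 : m+2 ≤ i) (h2 : i ≤ 2*m+2) : ∀ k, ent m i 0 k = rw5 1 0 0 0 0 k := by
  intro k; unfold ent
  rw [if_neg (by omega), if_neg (by omega), if_neg (by omega), if_pos h2, if_pos rfl]
lemma entI1 (h1 : m+2 ≤ i) (h2 : i ≤ 2*m+2) : ∀ k, ent m i 1 k = rw5 0 1 0 0 0 k := by
  intro k; unfold ent
  rw [if_neg (by omega), if_neg (by omega), if_neg (by omega), if_pos h2, if_neg (by omega),
    if_pos rfl]
lemma entI2 (h1 : m+2 ≤ i) (h2 : i ≤ 2*m+2) : ∀ k, ent m i 2 k = rw5 0 0 1 0 0 k := by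
  intro k; unfold ent
  rw [if_neg (by omega), if_neg (by omega), if_neg (by omega), if_pos h2, if_neg (by omega),
    if_neg (by omega), if_pos rfl]
lemma entI3 (h1 : m+2 ≤ i) (h2 : i ≤ 2*m+2) : ∀ k, ent m i 3 k = rw5 0 0 0 1 0 k := by
  intro k; unfold ent
  rw [if_neg (by omega), if_neg (by omega), if_neg (by omega), if_pos h2, if_neg (by omega),
    if_neg (by omega), if_neg (by omega), if_pos rfl]
lemma entIbig (h1 : m+2 ≤ i) (h2 : i ≤ 2*m+2) {j : ℕ} (hj : 4 ≤ j) :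
    ∀ k, ent m i j k = rw5 0 0 0 0 0 k := by
  intro k; unfold ent
  rw [if_neg (by omega), if_neg (by omega), if_neg (by omega), if_pos h2, if_neg (by omega),
    if_neg (by omega), if_neg (by omega), if_neg (by omega)]

lemma entF0 (h1 : 2*m+3 ≤ i) : ∀ k, ent m i 0 k = rw5 (S m / 2) 1 (-1) (-(S m / 2)) 0 k := by
  intro k; unfold ent
  rw [if_neg (by omega), if_neg (by omega), if_neg (by omega), if_neg (by omega), if_pos rfl]

end entrows

/-! ### step lemmas -/

lemma step0 (m : ℕ) (w : Fin (pfun m 0) → ℝ) (j : Fin (pfun m 1)) (a b c d e : ℝ)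
    (hrow : ∀ k : ℕ, ent m 0 (j:ℕ) k = rw5 a b c d e k) :
    (net m).pre absAct 0 w j
      = a * w ⟨0, by simp [pfun]⟩ + b * w ⟨1, by simp [pfun]⟩ + c * w ⟨2, by simp [pfun]⟩ := by
  show ((net m).W 0 *ᵥ w) j = _
  simp only [Matrix.mulVec, dotProduct]
  rw [Finset.sum_congr rfl (fun k _ => by
    rw [show (net m).W 0 j k = rw5 a b c d e (k:ℕ) from hrow k])]
  exact sum_rw5_3 (pfun_zero m) w a b c d e

lemma step (m : ℕ) (i : ℕ) (h5 : 5 ≤ pfun m (i+1)) (w : Fin (pfun m 0) → ℝ)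
    (j : Fin (pfun m (i+1+1))) (a b c d e : ℝ)
    (hrow : ∀ k : ℕ, ent m (i+1) (j:ℕ) k = rw5 a b c d e k) :
    (net m).pre absAct (i+1) w j
      = a * |(net m).pre absAct i w ⟨0, by omega⟩|
      + b * |(net m).pre absAct i w ⟨1, by omega⟩|
      + c * |(net m).pre absAct i w ⟨2, by omega⟩|
      + d * |(net m).pre absAct i w ⟨3, by omega⟩|
      + e * |(net m).pre absAct i w ⟨4, by omega⟩| := by
  show ((net m).W (i+1) *ᵥ fun j' => absAct ((net m).pre absAct i w j')) j = _
  simp only [Matrix.mulVec, dotProduct]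
  rw [Finset.sum_congr rfl (fun k _ => by
    rw [show (net m).W (i+1) j k = rw5 a b c d e (k:ℕ) from hrow k])]
  rw [sum_rw5 h5]
  simp only [absAct]

lemma astep0 (m : ℕ) (j : Fin (pfun m 1)) (l : Fin (pfun m 0)) (a b c d e : ℝ)
    (hrow : ∀ k : ℕ, ent m 0 (j:ℕ) k = rw5 a b c d e k) :
    (net m).absProd 0 j l = rw5 |a| |b| |c| |d| |e| (l:ℕ) := by
  show |(net m).W 0 j l| = _
  rw [show (net m).W 0 j l = rw5 a b c d e (l:ℕ) from hrow l, abs_rw5]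

lemma astep (m : ℕ) (i : ℕ) (h5 : 5 ≤ pfun m (i+1))
    (j : Fin (pfun m (i+1+1))) (l : Fin (pfun m 0)) (a b c d e : ℝ)
    (hrow : ∀ k : ℕ, ent m (i+1) (j:ℕ) k = rw5 a b c d e k) :
    (net m).absProd (i+1) j l
      = |a| * (net m).absProd i ⟨0, by omega⟩ l
      + |b| * (net m).absProd i ⟨1, by omega⟩ l
      + |c| * (net m).absProd i ⟨2, by omega⟩ l
      + |d| * (net m).absProd i ⟨3, by omega⟩ l
      + |e| * (net m).absProd i ⟨4, by omega⟩ l := by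
  show ((Matrix.of fun j' k => |(net m).W (i+1) j' k|) * (net m).absProd i) j l = _
  rw [Matrix.mul_apply]
  rw [Finset.sum_congr rfl (fun k _ => by
    rw [show (Matrix.of fun j' k' => |(net m).W (i+1) j' k'|) j k
        = rw5 |a| |b| |c| |d| |e| (k:ℕ) from by
      show |(net m).W (i+1) j k| = _
      rw [show (net m).W (i+1) j k = rw5 a b c d e (k:ℕ) from hrow k, abs_rw5]])]
  exact sum_rw5 h5 (fun k => (net m).absProd i k l) _ _ _ _ _

/-! ### state values -/

def uu (x y : ℝ) : ℝ := (x+y)/2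
def vv (x y : ℝ) : ℝ := |x - y|/2

lemma uu_nonneg {x y : ℝ} (hx : 0 ≤ x) (hy : 0 ≤ y) : 0 ≤ uu x y := by
  unfold uu; linarith
lemma vv_nonneg (x y : ℝ) : 0 ≤ vv x y := by
  unfold vv; positivity
lemma abs_half_sub (x y : ℝ) : |(x - y)/2| = vv x y := by
  unfold vv
  rw [abs_div]
  norm_num

def qv (m : ℕ) (x y : ℝ) (i : ℕ) : ℕ → ℝ :=
  if i = 0 then rw5 1 (uu x y) ((x-y)/2) 0 0
  else if i ≤ m then rw5 1 (G (uu x y) (i-1)) (G (vv x y) (i-1))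
      (if i = 1 then 2*(uu x y) - 1 else 1 - 2*(T^[i-1] (uu x y)))
      (if i = 1 then 2*(vv x y) - 1 else 1 - 2*(T^[i-1] (vv x y)))
  else if i = m+1 then rw5 1 (G (uu x y) m) (G (vv x y) m) (-1) 0
  else if i ≤ 2*m+2 then rw5 1 (G (uu x y) m) (G (vv x y) m) 1 0
  else rw5 (G (uu x y) m - G (vv x y) m) 0 0 0 0

def sv (m : ℕ) (x y : ℝ) (i : ℕ) : ℕ → ℝ :=
  if i = 0 then rw5 1 (uu x y) (vv x y) 0 0
  else if i ≤ m then rw5 1 (G (uu x y) (i-1)) (G (vv x y) (i-1))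
    (T^[i] (uu x y)) (T^[i] (vv x y))
  else rw5 1 (G (uu x y) m) (G (vv x y) m) 1 0

lemma qv0 (m : ℕ) (x y : ℝ) : qv m x y 0 = rw5 1 (uu x y) ((x-y)/2) 0 0 := by
  unfold qv; rw [if_pos rfl]

lemma qvT (m : ℕ) (x y : ℝ) {i : ℕ} (h1 : 1 ≤ i) (h2 : i ≤ m) :
    qv m x y i = rw5 1 (G (uu x y) (i-1)) (G (vv x y) (i-1))
      (if i = 1 then 2*(uu x y) - 1 else 1 - 2*(T^[i-1] (uu x y)))
      (if i = 1 then 2*(vv x y) - 1 else 1 - 2*(T^[i-1] (vv x y))) := by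
  unfold qv; rw [if_neg (by omega), if_pos h2]

lemma qvM (m : ℕ) (x y : ℝ) :
    qv m x y (m+1) = rw5 1 (G (uu x y) m) (G (vv x y) m) (-1) 0 := by
  unfold qv; rw [if_neg (by omega), if_neg (by omega), if_pos rfl]

lemma qvI (m : ℕ) (x y : ℝ) {i : ℕ} (h1 : m+2 ≤ i) (h2 : i ≤ 2*m+2) :
    qv m x y i = rw5 1 (G (uu x y) m) (G (vv x y) m) 1 0 := by
  unfold qv; rw [if_neg (by omega), if_neg (by omega), if_neg (by omega), if_pos h2]

lemma qvF (m : ℕ) (x y : ℝ) :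
    qv m x y (2*m+3) = rw5 (G (uu x y) m - G (vv x y) m) 0 0 0 0 := by
  unfold qv
  rw [if_neg (by omega), if_neg (by omega), if_neg (by omega), if_neg (by omega)]

lemma sv0 (m : ℕ) (x y : ℝ) : sv m x y 0 = rw5 1 (uu x y) (vv x y) 0 0 := by
  unfold sv; rw [if_pos rfl]

lemma svT (m : ℕ) (x y : ℝ) {i : ℕ} (h1 : 1 ≤ i) (h2 : i ≤ m) :
    sv m x y i = rw5 1 (G (uu x y) (i-1)) (G (vv x y) (i-1))
      (T^[i] (uu x y)) (T^[i] (vv x y)) := by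
  unfold sv; rw [if_neg (by omega), if_pos h2]

lemma svI (m : ℕ) (x y : ℝ) {i : ℕ} (h1 : m+1 ≤ i) :
    sv m x y i = rw5 1 (G (uu x y) m) (G (vv x y) m) 1 0 := by
  unfold sv; rw [if_neg (by omega), if_neg (by omega)]

lemma abs_pre_z {t : ℝ} : |2*t - 1| = T^[1] t := by
  rw [Function.iterate_one]
  unfold T
  rw [abs_sub_comm]

lemma abs_pre_z' {t : ℝ} (n : ℕ) : |1 - 2*(T^[n+1] t)| = T^[n+2] t := by
  rw [show T^[n+2] t = T (T^[n+1] t) from Function.iterate_succ_apply' T (n+1) t]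
  rfl

lemma qv_abs (m : ℕ) (x y : ℝ) (hx0 : 0 ≤ x) (hy0 : 0 ≤ y)
    (i : ℕ) (hi : i ≤ 2*m+2) (c : ℕ) :
    |qv m x y i c| = sv m x y i c := by
  have hu := uu_nonneg hx0 hy0
  have hv := vv_nonneg x y
  rcases Nat.eq_zero_or_pos i with h0 | hpos
  · subst h0
    rw [qv0, sv0]
    unfold rw5
    split_ifs
    · exact abs_one
    · exact abs_of_nonneg hu
    · exact abs_half_sub x y
    · exact abs_zero
    · exact abs_zero
    · exact abs_zero
  · by_cases him : i ≤ m
    · by_cases h1 : i = 1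
      · subst h1
        rw [qvT m x y hpos him, svT m x y hpos him]
        rw [if_pos (rfl : (1:ℕ) = 1), if_pos (rfl : (1:ℕ) = 1)]
        unfold rw5
        split_ifs
        · exact abs_one
        · exact abs_of_nonneg (G_nonneg hu _)
        · exact abs_of_nonneg (G_nonneg hv _)
        · exact abs_pre_z
        · exact abs_pre_z
        · exact abs_zero
      · obtain ⟨n, rfl⟩ : ∃ n, i = n+2 := ⟨i-2, by omega⟩
        rw [qvT m x y hpos him, svT m x y hpos him]
        rw [if_neg h1, if_neg h1, show n+2-1 = n+1 from rfl]
        unfold rw5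
        split_ifs
        · exact abs_one
        · exact abs_of_nonneg (G_nonneg hu _)
        · exact abs_of_nonneg (G_nonneg hv _)
        · exact abs_pre_z' n
        · exact abs_pre_z' n
        · exact abs_zero
    · by_cases hm1 : i = m+1
      · subst hm1
        rw [qvM, svI m x y (le_refl _)]
        unfold rw5
        split_ifs
        · exact abs_one
        · exact abs_of_nonneg (G_nonneg hu _)
        · exact abs_of_nonneg (G_nonneg hv _)
        · rw [abs_neg, abs_one]
        · exact abs_zero
        · exact abs_zero
      · rw [qvI m x y (by omega) hi, svI m x y (by omega)]
        unfold rw5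
        split_ifs
        · exact abs_one
        · exact abs_of_nonneg (G_nonneg hu _)
        · exact abs_of_nonneg (G_nonneg hv _)
        · exact abs_one
        · exact abs_zero
        · exact abs_zero

lemma rw5_at0 (c0 c1 c2 c3 c4 : ℝ) : rw5 c0 c1 c2 c3 c4 0 = c0 := rfl
lemma rw5_at1 (c0 c1 c2 c3 c4 : ℝ) : rw5 c0 c1 c2 c3 c4 1 = c1 := rfl
lemma rw5_at2 (c0 c1 c2 c3 c4 : ℝ) : rw5 c0 c1 c2 c3 c4 2 = c2 := rfl
lemma rw5_at3 (c0 c1 c2 c3 c4 : ℝ) : rw5 c0 c1 c2 c3 c4 3 = c3 := rfl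
lemma rw5_at4 (c0 c1 c2 c3 c4 : ℝ) : rw5 c0 c1 c2 c3 c4 4 = c4 := rfl

/-! ### the evaluation of the network -/

lemma pre_eq (m : ℕ) (hm : 1 ≤ m) (x y : ℝ) (hx0 : 0 ≤ x) (hy0 : 0 ≤ y)
    (w : Fin (pfun m 0) → ℝ) (hw : ∀ k : Fin (pfun m 0), w k = rw5 1 x y 0 0 (k:ℕ)) :
    ∀ i, i ≤ 2*m+3 → ∀ j : Fin (pfun m (i+1)),
      (net m).pre absAct i w j = qv m x y i (j:ℕ) := by
  have hw' : ∀ (a : ℕ) (h : a < pfun m 0), w ⟨a,h⟩ = rw5 1 x y 0 0 a := fun a h => hw ⟨a,h⟩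
  intro i
  induction i with
  | zero =>
    intro _ j
    obtain ⟨jv, hj⟩ := j
    show (net m).pre absAct 0 w ⟨jv, hj⟩ = qv m x y 0 jv
    rw [qv0]
    by_cases e0 : jv = 0
    · subst e0
      rw [step0 m w ⟨0, hj⟩ 1 0 0 0 0 (ent00 m), hw', hw', hw']
      simp only [rw5_at0, rw5_at1, rw5_at2]
      norm_num
    · by_cases e1 : jv = 1
      · subst e1
        rw [step0 m w ⟨1, hj⟩ 0 (1/2) (1/2) 0 0 (ent01 m), hw', hw', hw']
        simp only [rw5_at0, rw5_at1, rw5_at2, uu]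
        ring
      · by_cases e2 : jv = 2
        · subst e2
          rw [step0 m w ⟨2, hj⟩ 0 (1/2) (-(1/2)) 0 0 (ent02 m), hw', hw', hw']
          simp only [rw5_at0, rw5_at1, rw5_at2]
          ring
        · rw [step0 m w ⟨jv, hj⟩ 0 0 0 0 0 (ent0big m (j := jv) (by omega)), hw', hw', hw']
          simp [rw5, e0, e1, e2]
  | succ i ih =>
    intro hi1 j
    have h5 : 5 ≤ pfun m (i+1) := by
      rw [pfun_mid m (by omega) (by omega)]; omega
    have habs : ∀ (a : ℕ) (h : a < pfun m (i+1)),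
        |(net m).pre absAct i w ⟨a, h⟩| = sv m x y i a := fun a h => by
      rw [ih (by omega) ⟨a, h⟩]
      exact qv_abs m x y hx0 hy0 i (by omega) a
    obtain ⟨jv, hj⟩ := j
    show (net m).pre absAct (i+1) w ⟨jv, hj⟩ = qv m x y (i+1) jv
    by_cases hA : i + 1 ≤ m
    · -- tent layers
      rw [qvT m x y (by omega) hA]
      rcases Nat.eq_zero_or_pos i with rfl | hip
      · -- layer 1
        rw [if_pos (rfl : 0+1 = 1), if_pos (rfl : 0+1 = 1)]
        by_cases e0 : jv = 0
        · subst e0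
          rw [step m 0 h5 w ⟨0, hj⟩ 1 0 0 0 0 (entT0 m (by omega) hA)]
          rw [habs 0, habs 1, habs 2, habs 3, habs 4, sv0]
          simp only [rw5_at0, rw5_at1, rw5_at2, rw5_at3, rw5_at4]
          norm_num
        · by_cases e1 : jv = 1
          · subst e1
            rw [step m 0 h5 w ⟨1, hj⟩ 0 1 0 (((4:ℝ)^(0+1-1))⁻¹) 0 (entT1 m (by omega) hA)]
            rw [habs 0, habs 1, habs 2, habs 3, habs 4, sv0]
            simp only [rw5_at0, rw5_at1, rw5_at2, rw5_at3, rw5_at4, Nat.add_sub_cancel, Nat.zero_add, G_zero]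
            norm_num [G_zero]
          · by_cases e2 : jv = 2
            · subst e2
              rw [step m 0 h5 w ⟨2, hj⟩ 0 0 1 0 (((4:ℝ)^(0+1-1))⁻¹) (entT2 m (by omega) hA)]
              rw [habs 0, habs 1, habs 2, habs 3, habs 4, sv0]
              simp only [rw5_at0, rw5_at1, rw5_at2, rw5_at3, rw5_at4, Nat.add_sub_cancel, Nat.zero_add, G_zero]
              norm_num [G_zero]
            · by_cases e3 : jv = 3
              · subst e3
                rw [step m 0 h5 w ⟨3, hj⟩ (-1) 2 0 0 0
                  (fun k => by rw [entT3 m (by omega) hA k]; exact if_pos rfl)]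
                rw [habs 0, habs 1, habs 2, habs 3, habs 4, sv0]
                simp only [rw5_at0, rw5_at1, rw5_at2, rw5_at3, rw5_at4]
                ring
              · by_cases e4 : jv = 4
                · subst e4
                  rw [step m 0 h5 w ⟨4, hj⟩ (-1) 0 2 0 0
                    (fun k => by rw [entT4 m (by omega) hA k]; exact if_pos rfl)]
                  rw [habs 0, habs 1, habs 2, habs 3, habs 4, sv0]
                  simp only [rw5_at0, rw5_at1, rw5_at2, rw5_at3, rw5_at4]
                  ring
                · rw [step m 0 h5 w ⟨jv, hj⟩ 0 0 0 0 0
                    (entTbig m (by omega) hA (j := jv) (by omega))]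
                  rw [habs 0, habs 1, habs 2, habs 3, habs 4, sv0]
                  simp [rw5, e0, e1, e2, e3, e4]
      · -- layers 2..m
        obtain ⟨n, rfl⟩ : ∃ n, i = n+1 := ⟨i-1, by omega⟩
        rw [if_neg (by omega), if_neg (by omega)]
        have hsv := svT m x y (show 1 ≤ n+1 by omega) (show n+1 ≤ m by omega)
        by_cases e0 : jv = 0
        · subst e0
          rw [step m (n+1) h5 w ⟨0, hj⟩ 1 0 0 0 0 (entT0 m (by omega) hA)]
          rw [habs 0, habs 1, habs 2, habs 3, habs 4, hsv]
          simp only [rw5_at0, rw5_at1, rw5_at2, rw5_at3, rw5_at4]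
          norm_num
        · by_cases e1 : jv = 1
          · subst e1
            rw [step m (n+1) h5 w ⟨1, hj⟩ 0 1 0 (((4:ℝ)^(n+1+1-1))⁻¹) 0
              (entT1 m (by omega) hA)]
            rw [habs 0, habs 1, habs 2, habs 3, habs 4, hsv]
            simp only [rw5_at0, rw5_at1, rw5_at2, rw5_at3, rw5_at4, Nat.add_sub_cancel]
            rw [G_succ]
            ring
          · by_cases e2 : jv = 2
            · subst e2
              rw [step m (n+1) h5 w ⟨2, hj⟩ 0 0 1 0 (((4:ℝ)^(n+1+1-1))⁻¹)
                (entT2 m (by omega) hA)]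
              rw [habs 0, habs 1, habs 2, habs 3, habs 4, hsv]
              simp only [rw5_at0, rw5_at1, rw5_at2, rw5_at3, rw5_at4, Nat.add_sub_cancel]
              rw [G_succ]
              ring
            · by_cases e3 : jv = 3
              · subst e3
                rw [step m (n+1) h5 w ⟨3, hj⟩ 1 0 0 (-2) 0
                  (fun k => by rw [entT3 m (by omega) hA k]; exact if_neg (by omega))]
                rw [habs 0, habs 1, habs 2, habs 3, habs 4, hsv]
                simp only [rw5_at0, rw5_at1, rw5_at2, rw5_at3, rw5_at4, Nat.add_sub_cancel]
                ring
              · by_cases e4 : jv = 4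
                · subst e4
                  rw [step m (n+1) h5 w ⟨4, hj⟩ 1 0 0 0 (-2)
                    (fun k => by rw [entT4 m (by omega) hA k]; exact if_neg (by omega))]
                  rw [habs 0, habs 1, habs 2, habs 3, habs 4, hsv]
                  simp only [rw5_at0, rw5_at1, rw5_at2, rw5_at3, rw5_at4, Nat.add_sub_cancel]
                  ring
                · rw [step m (n+1) h5 w ⟨jv, hj⟩ 0 0 0 0 0
                    (entTbig m (by omega) hA (j := jv) (by omega))]
                  rw [habs 0, habs 1, habs 2, habs 3, habs 4, hsv]
                  simp [rw5, e0, e1, e2, e3, e4]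
    · by_cases hB : i + 1 = m + 1
      · -- layer m+1
        obtain ⟨mm, rfl⟩ : ∃ mm, m = mm+1 := ⟨m-1, by omega⟩
        have hieq : i = mm+1 := by omega
        subst hieq
        rw [qvM]
        have hsv := svT (mm+1) x y (show 1 ≤ mm+1 by omega) (le_refl (mm+1))
        by_cases e0 : jv = 0
        · subst e0
          rw [step (mm+1) (mm+1) h5 w ⟨0, hj⟩ 1 0 0 0 0 (entM0 (mm+1))]
          rw [habs 0, habs 1, habs 2, habs 3, habs 4, hsv]
          simp only [rw5_at0, rw5_at1, rw5_at2, rw5_at3, rw5_at4]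
          norm_num
        · by_cases e1 : jv = 1
          · subst e1
            rw [step (mm+1) (mm+1) h5 w ⟨1, hj⟩ 0 1 0 (((4:ℝ)^(mm+1))⁻¹) 0 (entM1 (mm+1))]
            rw [habs 0, habs 1, habs 2, habs 3, habs 4, hsv]
            simp only [rw5_at0, rw5_at1, rw5_at2, rw5_at3, rw5_at4, Nat.add_sub_cancel]
            rw [G_succ]
            ring
          · by_cases e2 : jv = 2
            · subst e2
              rw [step (mm+1) (mm+1) h5 w ⟨2, hj⟩ 0 0 1 0 (((4:ℝ)^(mm+1))⁻¹) (entM2 (mm+1))]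
              rw [habs 0, habs 1, habs 2, habs 3, habs 4, hsv]
              simp only [rw5_at0, rw5_at1, rw5_at2, rw5_at3, rw5_at4, Nat.add_sub_cancel]
              rw [G_succ]
              ring
            · by_cases e3 : jv = 3
              · subst e3
                rw [step (mm+1) (mm+1) h5 w ⟨3, hj⟩ (-1) 0 0 0 0 (entM3 (mm+1))]
                rw [habs 0, habs 1, habs 2, habs 3, habs 4, hsv]
                simp only [rw5_at0, rw5_at1, rw5_at2, rw5_at3, rw5_at4]
                norm_num
              · rw [step (mm+1) (mm+1) h5 w ⟨jv, hj⟩ 0 0 0 0 0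
                  (entMbig (mm+1) (j := jv) (by omega))]
                rw [habs 0, habs 1, habs 2, habs 3, habs 4, hsv]
                simp [rw5, e0, e1, e2, e3]
      · by_cases hC : i + 1 ≤ 2*m+2
        · -- identity layers
          rw [qvI m x y (by omega) hC]
          have hsv := svI m x y (show m+1 ≤ i by omega)
          by_cases e0 : jv = 0
          · subst e0
            rw [step m i h5 w ⟨0, hj⟩ 1 0 0 0 0 (entI0 m (by omega) hC)]
            rw [habs 0, habs 1, habs 2, habs 3, habs 4, hsv]
            simp only [rw5_at0, rw5_at1, rw5_at2, rw5_at3, rw5_at4]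
            norm_num
          · by_cases e1 : jv = 1
            · subst e1
              rw [step m i h5 w ⟨1, hj⟩ 0 1 0 0 0 (entI1 m (by omega) hC)]
              rw [habs 0, habs 1, habs 2, habs 3, habs 4, hsv]
              simp only [rw5_at0, rw5_at1, rw5_at2, rw5_at3, rw5_at4]
              norm_num
            · by_cases e2 : jv = 2
              · subst e2
                rw [step m i h5 w ⟨2, hj⟩ 0 0 1 0 0 (entI2 m (by omega) hC)]
                rw [habs 0, habs 1, habs 2, habs 3, habs 4, hsv]
                simp only [rw5_at0, rw5_at1, rw5_at2, rw5_at3, rw5_at4]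
                norm_num
              · by_cases e3 : jv = 3
                · subst e3
                  rw [step m i h5 w ⟨3, hj⟩ 0 0 0 1 0 (entI3 m (by omega) hC)]
                  rw [habs 0, habs 1, habs 2, habs 3, habs 4, hsv]
                  simp only [rw5_at0, rw5_at1, rw5_at2, rw5_at3, rw5_at4]
                  norm_num
                · rw [step m i h5 w ⟨jv, hj⟩ 0 0 0 0 0
                    (entIbig m (by omega) hC (j := jv) (by omega))]
                  rw [habs 0, habs 1, habs 2, habs 3, habs 4, hsv]
                  simp [rw5, e0, e1, e2, e3]
        · -- final layer
          have hieq : i = 2*m+2 := by omega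
          subst hieq
          have hp1 : pfun m (2*m+2+1+1) = 1 := pfun_last m
          have e0 : jv = 0 := by omega
          subst e0
          show (net m).pre absAct (2*m+2+1) w ⟨0, hj⟩ = qv m x y (2*m+3) 0
          rw [qvF]
          rw [step m (2*m+2) h5 w ⟨0, hj⟩ (S m / 2) 1 (-1) (-(S m / 2)) 0
            (entF0 m (by omega))]
          rw [habs 0, habs 1, habs 2, habs 3, habs 4, svI m x y (show m+1 ≤ 2*m+2 by omega)]
          simp only [rw5_at0, rw5_at1, rw5_at2, rw5_at3, rw5_at4]
          ring

/-! ### the absolute value product -/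

def co3 (a b c : ℝ) : ℕ → ℝ := rw5 a b c 0 0

lemma co3_congr {l : ℕ} {a b c a' b' c' : ℝ} (h1 : a = a') (h2 : b = b') (h3 : c = c') :
    co3 a b c l = co3 a' b' c' l := by rw [h1, h2, h3]

lemma co3_add (a b c a' b' c' : ℝ) (l : ℕ) :
    co3 a b c l + co3 a' b' c' l = co3 (a+a') (b+b') (c+c') l := by
  unfold co3 rw5; split_ifs <;> ring

lemma co3_smul (r a b c : ℝ) (l : ℕ) :
    r * co3 a b c l = co3 (r*a) (r*b) (r*c) l := by
  unfold co3 rw5; split_ifs <;> ring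

def PP (n : ℕ) : ℝ := ∑ k ∈ Finset.range n, ((2:ℝ)^(k+1) - 1)/2^(2*(k+1))
def QQ (n : ℕ) : ℝ := 1/2 + ∑ k ∈ Finset.range n, (2:ℝ)^k/4^(k+1)

lemma PP_zero : PP 0 = 0 := by simp [PP]
lemma QQ_zero : QQ 0 = 1/2 := by simp [QQ]
lemma PP_succ (n : ℕ) : PP (n+1) = PP n + ((2:ℝ)^(n+1) - 1)/2^(2*(n+1)) := by
  unfold PP; rw [Finset.sum_range_succ]
lemma QQ_succ (n : ℕ) : QQ (n+1) = QQ n + (2:ℝ)^n/4^(n+1) := by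
  unfold QQ; rw [Finset.sum_range_succ]; ring

lemma four_pow (K : ℕ) : (4:ℝ)^K = 2^(2*K) := by
  rw [pow_mul]; norm_num

def ch5 (r0 r1 r2 r3 r4 : ℕ → ℝ) : ℕ → ℕ → ℝ := fun c =>
  if c = 0 then r0 else if c = 1 then r1 else if c = 2 then r2
  else if c = 3 then r3 else if c = 4 then r4 else co3 0 0 0

lemma ch5_at0 (r0 r1 r2 r3 r4 : ℕ → ℝ) : ch5 r0 r1 r2 r3 r4 0 = r0 := rfl
lemma ch5_at1 (r0 r1 r2 r3 r4 : ℕ → ℝ) : ch5 r0 r1 r2 r3 r4 1 = r1 := rfl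
lemma ch5_at2 (r0 r1 r2 r3 r4 : ℕ → ℝ) : ch5 r0 r1 r2 r3 r4 2 = r2 := rfl
lemma ch5_at3 (r0 r1 r2 r3 r4 : ℕ → ℝ) : ch5 r0 r1 r2 r3 r4 3 = r3 := rfl
lemma ch5_at4 (r0 r1 r2 r3 r4 : ℕ → ℝ) : ch5 r0 r1 r2 r3 r4 4 = r4 := rfl
lemma ch5_big (r0 r1 r2 r3 r4 : ℕ → ℝ) {c : ℕ} (h : 5 ≤ c) :
    ch5 r0 r1 r2 r3 r4 c = co3 0 0 0 := by
  unfold ch5; split_ifs <;> first | omega | rfl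

def Rw (m : ℕ) (i : ℕ) : ℕ → ℕ → ℝ :=
  if i = 0 then
    ch5 (co3 1 0 0) (co3 0 (1/2) (1/2)) (co3 0 (1/2) (1/2)) (co3 0 0 0) (co3 0 0 0)
  else if i ≤ m then
    ch5 (co3 1 0 0)
      (co3 (PP (i-1)) (QQ (i-1)) (QQ (i-1))) (co3 (PP (i-1)) (QQ (i-1)) (QQ (i-1)))
      (co3 ((2:ℝ)^i - 1) (2^(i-1)) (2^(i-1))) (co3 ((2:ℝ)^i - 1) (2^(i-1)) (2^(i-1)))
  else if i ≤ 2*m+2 then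
    ch5 (co3 1 0 0) (co3 (PP m) (QQ m) (QQ m)) (co3 (PP m) (QQ m) (QQ m))
      (co3 1 0 0) (co3 0 0 0)
  else
    ch5 (co3 (S m + (PP m + PP m)) (QQ m + QQ m) (QQ m + QQ m))
      (co3 0 0 0) (co3 0 0 0) (co3 0 0 0) (co3 0 0 0)

lemma RwZ (m : ℕ) : Rw m 0 =
    ch5 (co3 1 0 0) (co3 0 (1/2) (1/2)) (co3 0 (1/2) (1/2)) (co3 0 0 0) (co3 0 0 0) := by
  unfold Rw; rw [if_pos rfl]

lemma RwT (m : ℕ) {i : ℕ} (h1 : 1 ≤ i) (h2 : i ≤ m) : Rw m i =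
    ch5 (co3 1 0 0)
      (co3 (PP (i-1)) (QQ (i-1)) (QQ (i-1))) (co3 (PP (i-1)) (QQ (i-1)) (QQ (i-1)))
      (co3 ((2:ℝ)^i - 1) (2^(i-1)) (2^(i-1))) (co3 ((2:ℝ)^i - 1) (2^(i-1)) (2^(i-1))) := by
  unfold Rw; rw [if_neg (by omega), if_pos h2]

lemma RwI (m : ℕ) {i : ℕ} (h1 : m+1 ≤ i) (h2 : i ≤ 2*m+2) : Rw m i =
    ch5 (co3 1 0 0) (co3 (PP m) (QQ m) (QQ m)) (co3 (PP m) (QQ m) (QQ m))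
      (co3 1 0 0) (co3 0 0 0) := by
  unfold Rw; rw [if_neg (by omega), if_neg (by omega), if_pos h2]

lemma RwF (m : ℕ) {i : ℕ} (h1 : 2*m+3 ≤ i) : Rw m i =
    ch5 (co3 (S m + (PP m + PP m)) (QQ m + QQ m) (QQ m + QQ m))
      (co3 0 0 0) (co3 0 0 0) (co3 0 0 0) (co3 0 0 0) := by
  unfold Rw; rw [if_neg (by omega), if_neg (by omega), if_neg (by omega)]

lemma abs_half : |(1/2:ℝ)| = 1/2 := by norm_num
lemma abs_nhalf : |(-(1/2):ℝ)| = 1/2 := by norm_num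
lemma abs_two' : |(2:ℝ)| = 2 := by norm_num
lemma abs_ntwo : |(-2:ℝ)| = 2 := by norm_num
lemma abs_none : |(-1:ℝ)| = 1 := by norm_num
lemma abs_inv4 (K : ℕ) : |((4:ℝ)^K)⁻¹| = ((4:ℝ)^K)⁻¹ := abs_of_nonneg (by positivity)
lemma abs_Shalf (m : ℕ) : |S m/2| = S m/2 := abs_of_nonneg (by linarith [S_nonneg m])
lemma abs_nShalf (m : ℕ) : |(-(S m/2))| = S m/2 := by rw [abs_neg]; exact abs_Shalf m

lemma aprod_eq (m : ℕ) (hm : 1 ≤ m) :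
    ∀ i, i ≤ 2*m+3 → ∀ (j : Fin (pfun m (i+1))) (l : Fin (pfun m 0)),
      (net m).absProd i j l = Rw m i (j:ℕ) (l:ℕ) := by
  intro i
  induction i with
  | zero =>
    intro _ j l
    obtain ⟨jv, hj⟩ := j
    show (net m).absProd 0 ⟨jv,hj⟩ l = Rw m 0 jv (l:ℕ)
    rw [RwZ]
    by_cases e0 : jv = 0
    · subst e0
      rw [astep0 m ⟨0,hj⟩ l 1 0 0 0 0 (ent00 m)]
      simp only [abs_one, abs_zero]
      rfl
    · by_cases e1 : jv = 1
      · subst e1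
        rw [astep0 m ⟨1,hj⟩ l 0 (1/2) (1/2) 0 0 (ent01 m)]
        simp only [abs_half, abs_zero]
        rfl
      · by_cases e2 : jv = 2
        · subst e2
          rw [astep0 m ⟨2,hj⟩ l 0 (1/2) (-(1/2)) 0 0 (ent02 m)]
          simp only [abs_half, abs_nhalf, abs_zero]
          rfl
        · rw [astep0 m ⟨jv,hj⟩ l 0 0 0 0 0 (ent0big m (j := jv) (by omega))]
          simp only [abs_zero]
          rw [show ch5 (co3 1 0 0) (co3 0 (1/2) (1/2)) (co3 0 (1/2) (1/2)) (co3 0 0 0)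
              (co3 0 0 0) jv = co3 0 0 0 from by
            unfold ch5; split_ifs <;> first | omega | rfl]
          rfl
  | succ i ih =>
    intro hi1 j l
    have h5 : 5 ≤ pfun m (i+1) := by
      rw [pfun_mid m (by omega) (by omega)]; omega
    have hI : ∀ (a : ℕ) (h : a < pfun m (i+1)),
        (net m).absProd i ⟨a, h⟩ l = Rw m i a (l:ℕ) := fun a h =>
      ih (by omega) ⟨a, h⟩ l
    obtain ⟨jv, hj⟩ := j
    show (net m).absProd (i+1) ⟨jv, hj⟩ l = Rw m (i+1) jv (l:ℕ)
    by_cases hA : i + 1 ≤ m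
    · -- tent layers
      rw [RwT m (by omega) hA]
      rcases Nat.eq_zero_or_pos i with rfl | hip
      · -- layer 1
        rw [RwZ] at hI
        by_cases e0 : jv = 0
        · subst e0
          rw [astep m 0 h5 ⟨0, hj⟩ l 1 0 0 0 0 (entT0 m (by omega) hA)]
          rw [hI 0, hI 1, hI 2, hI 3, hI 4]
          simp only [ch5_at0, ch5_at1, ch5_at2, ch5_at3, ch5_at4,
            abs_one, abs_zero, co3_smul, co3_add]
          apply co3_congr <;> norm_num
        · by_cases e1 : jv = 1
          · subst e1
            rw [astep m 0 h5 ⟨1, hj⟩ l 0 1 0 (((4:ℝ)^(0+1-1))⁻¹) 0 (entT1 m (by omega) hA)]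
            rw [hI 0, hI 1, hI 2, hI 3, hI 4]
            simp only [ch5_at0, ch5_at1, ch5_at2, ch5_at3, ch5_at4,
              abs_one, abs_zero, abs_inv4, co3_smul, co3_add]
            apply co3_congr <;> norm_num [PP_zero, QQ_zero]
          · by_cases e2 : jv = 2
            · subst e2
              rw [astep m 0 h5 ⟨2, hj⟩ l 0 0 1 0 (((4:ℝ)^(0+1-1))⁻¹) (entT2 m (by omega) hA)]
              rw [hI 0, hI 1, hI 2, hI 3, hI 4]
              simp only [ch5_at0, ch5_at1, ch5_at2, ch5_at3, ch5_at4,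
                abs_one, abs_zero, abs_inv4, co3_smul, co3_add]
              apply co3_congr <;> norm_num [PP_zero, QQ_zero]
            · by_cases e3 : jv = 3
              · subst e3
                rw [astep m 0 h5 ⟨3, hj⟩ l (-1) 2 0 0 0
                  (fun k => by rw [entT3 m (by omega) hA k]; exact if_pos rfl)]
                rw [hI 0, hI 1, hI 2, hI 3, hI 4]
                simp only [ch5_at0, ch5_at1, ch5_at2, ch5_at3, ch5_at4,
                  abs_one, abs_zero, abs_none, abs_two', co3_smul, co3_add]
                apply co3_congr <;> norm_num
              · by_cases e4 : jv = 4
                · subst e4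
                  rw [astep m 0 h5 ⟨4, hj⟩ l (-1) 0 2 0 0
                    (fun k => by rw [entT4 m (by omega) hA k]; exact if_pos rfl)]
                  rw [hI 0, hI 1, hI 2, hI 3, hI 4]
                  simp only [ch5_at0, ch5_at1, ch5_at2, ch5_at3, ch5_at4,
                    abs_one, abs_zero, abs_none, abs_two', co3_smul, co3_add]
                  apply co3_congr <;> norm_num
                · rw [astep m 0 h5 ⟨jv, hj⟩ l 0 0 0 0 0
                    (entTbig m (by omega) hA (j := jv) (by omega))]
                  rw [hI 0, hI 1, hI 2, hI 3, hI 4]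
                  rw [ch5_big _ _ _ _ _ (show 5 ≤ jv by omega)]
                  simp only [ch5_at0, ch5_at1, ch5_at2, ch5_at3, ch5_at4,
                    abs_zero, co3_smul, co3_add]
                  apply co3_congr <;> norm_num
      · -- layers 2..m
        obtain ⟨n, rfl⟩ : ∃ n, i = n+1 := ⟨i-1, by omega⟩
        rw [RwT m (show 1 ≤ n+1 by omega) (show n+1 ≤ m by omega)] at hI
        simp only [Nat.add_sub_cancel]
        by_cases e0 : jv = 0
        · subst e0
          rw [astep m (n+1) h5 ⟨0, hj⟩ l 1 0 0 0 0 (entT0 m (by omega) hA)]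
          rw [hI 0, hI 1, hI 2, hI 3, hI 4]
          simp only [ch5_at0, ch5_at1, ch5_at2, ch5_at3, ch5_at4, Nat.add_sub_cancel,
            abs_one, abs_zero, co3_smul, co3_add]
          apply co3_congr <;> norm_num
        · by_cases e1 : jv = 1
          · subst e1
            rw [astep m (n+1) h5 ⟨1, hj⟩ l 0 1 0 (((4:ℝ)^(n+1+1-1))⁻¹) 0
              (entT1 m (by omega) hA)]
            rw [hI 0, hI 1, hI 2, hI 3, hI 4]
            simp only [ch5_at0, ch5_at1, ch5_at2, ch5_at3, ch5_at4, Nat.add_sub_cancel,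
              abs_one, abs_zero, abs_inv4, co3_smul, co3_add]
            apply co3_congr
            · rw [PP_succ, four_pow]; ring
            · rw [QQ_succ]; ring
            · rw [QQ_succ]; ring
          · by_cases e2 : jv = 2
            · subst e2
              rw [astep m (n+1) h5 ⟨2, hj⟩ l 0 0 1 0 (((4:ℝ)^(n+1+1-1))⁻¹)
                (entT2 m (by omega) hA)]
              rw [hI 0, hI 1, hI 2, hI 3, hI 4]
              simp only [ch5_at0, ch5_at1, ch5_at2, ch5_at3, ch5_at4, Nat.add_sub_cancel,
                abs_one, abs_zero, abs_inv4, co3_smul, co3_add]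
              apply co3_congr
              · rw [PP_succ, four_pow]; ring
              · rw [QQ_succ]; ring
              · rw [QQ_succ]; ring
            · by_cases e3 : jv = 3
              · subst e3
                rw [astep m (n+1) h5 ⟨3, hj⟩ l 1 0 0 (-2) 0
                  (fun k => by rw [entT3 m (by omega) hA k]; exact if_neg (by omega))]
                rw [hI 0, hI 1, hI 2, hI 3, hI 4]
                simp only [ch5_at0, ch5_at1, ch5_at2, ch5_at3, ch5_at4, Nat.add_sub_cancel,
                  abs_one, abs_zero, abs_ntwo, co3_smul, co3_add]
                apply co3_congr <;> ring
              · by_cases e4 : jv = 4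
                · subst e4
                  rw [astep m (n+1) h5 ⟨4, hj⟩ l 1 0 0 0 (-2)
                    (fun k => by rw [entT4 m (by omega) hA k]; exact if_neg (by omega))]
                  rw [hI 0, hI 1, hI 2, hI 3, hI 4]
                  simp only [ch5_at0, ch5_at1, ch5_at2, ch5_at3, ch5_at4, Nat.add_sub_cancel,
                    abs_one, abs_zero, abs_ntwo, co3_smul, co3_add]
                  apply co3_congr <;> ring
                · rw [astep m (n+1) h5 ⟨jv, hj⟩ l 0 0 0 0 0
                    (entTbig m (by omega) hA (j := jv) (by omega))]
                  rw [hI 0, hI 1, hI 2, hI 3, hI 4]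
                  rw [ch5_big _ _ _ _ _ (show 5 ≤ jv by omega)]
                  simp only [ch5_at0, ch5_at1, ch5_at2, ch5_at3, ch5_at4,
                    abs_zero, co3_smul, co3_add]
                  apply co3_congr <;> norm_num
    · by_cases hB : i + 1 = m + 1
      · -- layer m+1
        obtain ⟨mm, rfl⟩ : ∃ mm, m = mm+1 := ⟨m-1, by omega⟩
        have hieq : i = mm+1 := by omega
        subst hieq
        rw [RwI (mm+1) (le_refl (mm+1+1)) (by omega)]
        rw [RwT (mm+1) (show 1 ≤ mm+1 by omega) (le_refl (mm+1))] at hI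
        by_cases e0 : jv = 0
        · subst e0
          rw [astep (mm+1) (mm+1) h5 ⟨0, hj⟩ l 1 0 0 0 0 (entM0 (mm+1))]
          rw [hI 0, hI 1, hI 2, hI 3, hI 4]
          simp only [ch5_at0, ch5_at1, ch5_at2, ch5_at3, ch5_at4,
            abs_one, abs_zero, co3_smul, co3_add]
          apply co3_congr <;> norm_num
        · by_cases e1 : jv = 1
          · subst e1
            rw [astep (mm+1) (mm+1) h5 ⟨1, hj⟩ l 0 1 0 (((4:ℝ)^(mm+1))⁻¹) 0 (entM1 (mm+1))]
            rw [hI 0, hI 1, hI 2, hI 3, hI 4]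
            simp only [ch5_at0, ch5_at1, ch5_at2, ch5_at3, ch5_at4, Nat.add_sub_cancel,
              abs_one, abs_zero, abs_inv4, co3_smul, co3_add]
            apply co3_congr
            · rw [PP_succ, four_pow]; ring
            · rw [QQ_succ]; ring
            · rw [QQ_succ]; ring
          · by_cases e2 : jv = 2
            · subst e2
              rw [astep (mm+1) (mm+1) h5 ⟨2, hj⟩ l 0 0 1 0 (((4:ℝ)^(mm+1))⁻¹) (entM2 (mm+1))]
              rw [hI 0, hI 1, hI 2, hI 3, hI 4]
              simp only [ch5_at0, ch5_at1, ch5_at2, ch5_at3, ch5_at4, Nat.add_sub_cancel,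
                abs_one, abs_zero, abs_inv4, co3_smul, co3_add]
              apply co3_congr
              · rw [PP_succ, four_pow]; ring
              · rw [QQ_succ]; ring
              · rw [QQ_succ]; ring
            · by_cases e3 : jv = 3
              · subst e3
                rw [astep (mm+1) (mm+1) h5 ⟨3, hj⟩ l (-1) 0 0 0 0 (entM3 (mm+1))]
                rw [hI 0, hI 1, hI 2, hI 3, hI 4]
                simp only [ch5_at0, ch5_at1, ch5_at2, ch5_at3, ch5_at4,
                  abs_one, abs_zero, abs_none, co3_smul, co3_add]
                apply co3_congr <;> norm_num
              · rw [astep (mm+1) (mm+1) h5 ⟨jv, hj⟩ l 0 0 0 0 0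
                  (entMbig (mm+1) (j := jv) (by omega))]
                rw [hI 0, hI 1, hI 2, hI 3, hI 4]
                rw [show ch5 (co3 1 0 0) (co3 (PP (mm+1)) (QQ (mm+1)) (QQ (mm+1)))
                    (co3 (PP (mm+1)) (QQ (mm+1)) (QQ (mm+1))) (co3 1 0 0) (co3 0 0 0) jv
                    = co3 0 0 0 from by
                  unfold ch5; split_ifs <;> first | omega | rfl]
                simp only [ch5_at0, ch5_at1, ch5_at2, ch5_at3, ch5_at4,
                  abs_zero, co3_smul, co3_add]
                apply co3_congr <;> norm_num
      · by_cases hC : i + 1 ≤ 2*m+2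
        · -- identity layers
          rw [RwI m (by omega) hC]
          rw [RwI m (show m+1 ≤ i by omega) (by omega)] at hI
          by_cases e0 : jv = 0
          · subst e0
            rw [astep m i h5 ⟨0, hj⟩ l 1 0 0 0 0 (entI0 m (by omega) hC)]
            rw [hI 0, hI 1, hI 2, hI 3, hI 4]
            simp only [ch5_at0, ch5_at1, ch5_at2, ch5_at3, ch5_at4,
              abs_one, abs_zero, co3_smul, co3_add]
            apply co3_congr <;> norm_num
          · by_cases e1 : jv = 1
            · subst e1
              rw [astep m i h5 ⟨1, hj⟩ l 0 1 0 0 0 (entI1 m (by omega) hC)]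
              rw [hI 0, hI 1, hI 2, hI 3, hI 4]
              simp only [ch5_at0, ch5_at1, ch5_at2, ch5_at3, ch5_at4,
                abs_one, abs_zero, co3_smul, co3_add]
              apply co3_congr <;> norm_num
            · by_cases e2 : jv = 2
              · subst e2
                rw [astep m i h5 ⟨2, hj⟩ l 0 0 1 0 0 (entI2 m (by omega) hC)]
                rw [hI 0, hI 1, hI 2, hI 3, hI 4]
                simp only [ch5_at0, ch5_at1, ch5_at2, ch5_at3, ch5_at4,
                  abs_one, abs_zero, co3_smul, co3_add]
                apply co3_congr <;> norm_num
              · by_cases e3 : jv = 3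
                · subst e3
                  rw [astep m i h5 ⟨3, hj⟩ l 0 0 0 1 0 (entI3 m (by omega) hC)]
                  rw [hI 0, hI 1, hI 2, hI 3, hI 4]
                  simp only [ch5_at0, ch5_at1, ch5_at2, ch5_at3, ch5_at4,
                    abs_one, abs_zero, co3_smul, co3_add]
                  apply co3_congr <;> norm_num
                · rw [astep m i h5 ⟨jv, hj⟩ l 0 0 0 0 0
                    (entIbig m (by omega) hC (j := jv) (by omega))]
                  rw [hI 0, hI 1, hI 2, hI 3, hI 4]
                  rw [show ch5 (co3 1 0 0) (co3 (PP m) (QQ m) (QQ m)) (co3 (PP m) (QQ m) (QQ m))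
                      (co3 1 0 0) (co3 0 0 0) jv = co3 0 0 0 from by
                    unfold ch5; split_ifs <;> first | omega | rfl]
                  norm_num [co3, rw5_zero]
        · -- final layer
          have hieq : i = 2*m+2 := by omega
          subst hieq
          have hp1 : pfun m (2*m+2+1+1) = 1 := pfun_last m
          have e0 : jv = 0 := by omega
          subst e0
          rw [show (2:ℕ)*m+2+1 = 2*m+3 from rfl] at *
          rw [RwF m (le_refl (2*m+3))]
          rw [RwI m (show m+1 ≤ 2*m+2 by omega) (le_refl (2*m+2))] at hI
          rw [astep m (2*m+2) h5 ⟨0, hj⟩ l (S m / 2) 1 (-1) (-(S m / 2)) 0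
            (entF0 m (by omega))]
          rw [hI 0, hI 1, hI 2, hI 3, hI 4]
          simp only [ch5_at0, ch5_at1, ch5_at2, ch5_at3, ch5_at4,
            abs_one, abs_zero, abs_none, abs_Shalf, abs_nShalf, co3_smul, co3_add]
          apply co3_congr <;> ring

/-! ### final ingredients -/

lemma co3_at0 (a b c : ℝ) : co3 a b c 0 = a := rfl
lemma co3_at1 (a b c : ℝ) : co3 a b c 1 = b := rfl
lemma co3_at2 (a b c : ℝ) : co3 a b c 2 = c := rfl

lemma PP_eq_S (m : ℕ) : PP m = S m := by
  induction m with
  | zero =>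
    rw [PP_zero]
    unfold S
    rw [show Finset.Icc 1 0 = (∅ : Finset ℕ) from Finset.Icc_eq_empty (by omega)]
    simp
  | succ n ih =>
    rw [PP_succ, ih]
    unfold S
    rw [Finset.sum_Icc_succ_top (by omega : 1 ≤ n+1)]

lemma QQ2 (m : ℕ) : QQ m + QQ m = 2 - ((2:ℝ)^m)⁻¹ := by
  induction m with
  | zero => norm_num [QQ_zero]
  | succ n ih =>
    rw [QQ_succ]
    have h2 : (0:ℝ) < 2^n := by positivity
    have h4 : (4:ℝ)^(n+1) = (2^n) * (2^n) * 4 := by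
      rw [four_pow, show 2*(n+1) = n+n+2 by ring, pow_add, pow_add]
      ring
    have key : (2:ℝ)^n/(4:ℝ)^(n+1) + 2^n/(4:ℝ)^(n+1) = ((2:ℝ)^n)⁻¹ - ((2:ℝ)^(n+1))⁻¹ := by
      rw [h4, pow_succ]
      field_simp
      ring
    have h2' : ((2:ℝ)^n)⁻¹ = ((2:ℝ)^n)⁻¹ := rfl
    linarith [ih, key]

lemma sup_pfun (m : ℕ) (hm : 1 ≤ m) : (Finset.range (2*m+3+2)).sup (pfun m) = 3*m+2 := by
  apply le_antisymm
  · apply Finset.sup_le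
    intro i _
    unfold pfun
    split_ifs <;> omega
  · have h1 : (1:ℕ) ∈ Finset.range (2*m+3+2) := Finset.mem_range.2 (by omega)
    have h := Finset.le_sup (f := pfun m) h1
    rwa [pfun_mid m (by omega) (by omega)] at h

end MultNet

/-- Lemma 4 (Mult): for every `m ≥ 1` there is a depth-`2m+3` network `Mult_m` with the
absolute value activation, input dimension `3`, output dimension `1` and maximal width
`3m+2`, computing `x·y` on `[0,1]²` up to error `3·2^{-2m-3}` from the input `(1, x, y)`,
and whose product of entrywise absolute values of the weight matrices is the row vector
`(3 ∑_{k=1}^m (2^k - 1)/2^{2k}, 2 - 2^{-m}, 2 - 2^{-m})`. -/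
theorem exists_mult_network (m : ℕ) (hm : 0 < m) :
    ∃ (p : ℕ → ℕ) (h0 : p 0 = 3) (_ : p (2 * m + 3 + 1) = 1) (f : NN p),
      ((Finset.range (2 * m + 3 + 2)).sup p = 3 * m + 2) ∧
      (∀ x y : ℝ, x ∈ Set.Icc (0 : ℝ) 1 → y ∈ Set.Icc (0 : ℝ) 1 →
        |(∑ j, f.eval absAct (2 * m + 3) (![1, x, y] ∘ Fin.cast h0) j) - x * y|
          ≤ 3 * ((2 : ℝ) ^ (2 * m + 3))⁻¹) ∧
      (∀ (j : Fin (p (2 * m + 3 + 1))) (k : Fin (p 0)),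
        f.absProd (2 * m + 3) j k =
          if (k : ℕ) = 0 then 3 * ∑ i ∈ Finset.Icc 1 m, ((2 : ℝ) ^ i - 1) / 2 ^ (2 * i)
          else 2 - ((2 : ℝ) ^ m)⁻¹) := by
  refine ⟨MultNet.pfun m, MultNet.pfun_zero m, MultNet.pfun_last m, MultNet.net m, ?_, ?_, ?_⟩
  · exact MultNet.sup_pfun m hm
  · intro x y hx hy
    obtain ⟨hx0, hx1⟩ := hx
    obtain ⟨hy0, hy1⟩ := hy
    have hw : ∀ k : Fin (MultNet.pfun m 0),
        (![1,x,y] ∘ Fin.cast (MultNet.pfun_zero m)) k = MultNet.rw5 1 x y 0 0 (k:ℕ) := by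
      intro k
      obtain ⟨kv, hk⟩ := k
      have hk3 : kv < 3 := by rw [MultNet.pfun_zero m] at hk; exact hk
      interval_cases kv <;> rfl
    have hterm : ∀ j : Fin (MultNet.pfun m (2*m+3+1)),
        (MultNet.net m).eval absAct (2*m+3) (![1,x,y] ∘ Fin.cast (MultNet.pfun_zero m)) j
          = MultNet.G (MultNet.uu x y) m - MultNet.G (MultNet.vv x y) m := by
      intro j
      show (MultNet.net m).pre absAct (2*m+3) _ j = _
      rw [MultNet.pre_eq m hm x y hx0 hy0 _ hw (2*m+3) (le_refl _) j]
      have hj0 : (j:ℕ) = 0 := by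
        have h1 : MultNet.pfun m (2*m+3+1) = 1 := MultNet.pfun_last m
        have h2 := j.isLt
        omega
      rw [MultNet.qvF, hj0]
      rfl
    rw [Finset.sum_congr rfl (fun j _ => hterm j)]
    rw [Finset.sum_const, Finset.card_univ, Fintype.card_fin]
    rw [show MultNet.pfun m (2*m+3+1) = 1 from MultNet.pfun_last m, one_smul]
    have hu0 : 0 ≤ MultNet.uu x y := MultNet.uu_nonneg hx0 hy0
    have hu1 : MultNet.uu x y ≤ 1 := by unfold MultNet.uu; linarith
    have hv0 := MultNet.vv_nonneg x y
    have hv1 : MultNet.vv x y ≤ 1 := by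
      unfold MultNet.vv
      have : |x - y| ≤ 1 := abs_le.2 ⟨by linarith, by linarith⟩
      linarith
    have hFu := MultNet.F_bounds m (MultNet.uu x y) hu0 hu1
    have hFv := MultNet.F_bounds m (MultNet.vv x y) hv0 hv1
    have hG : MultNet.G (MultNet.uu x y) m - MultNet.G (MultNet.vv x y) m
        = MultNet.F (MultNet.uu x y) m - MultNet.F (MultNet.vv x y) m := by
      unfold MultNet.F; ring
    have hxy : (MultNet.uu x y)^2 - (MultNet.vv x y)^2 = x * y := by
      unfold MultNet.uu MultNet.vv
      rw [div_pow, div_pow, sq_abs]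
      ring
    have hbound : |(MultNet.G (MultNet.uu x y) m - MultNet.G (MultNet.vv x y) m) - x*y|
        ≤ ((4:ℝ)^(m+1))⁻¹ := by
      rw [hG, ← hxy]
      exact abs_le.2 ⟨by linarith [hFu.1, hFv.2], by linarith [hFu.2, hFv.1]⟩
    have hfin : ((4:ℝ)^(m+1))⁻¹ ≤ 3 * ((2:ℝ)^(2*m+3))⁻¹ := by
      have h1 : (4:ℝ)^(m+1) = 2^(2*m+2) := by
        rw [MultNet.four_pow, show 2*(m+1) = 2*m+2 by ring]
      have h2 : (2:ℝ)^(2*m+3) = 2^(2*m+2) * 2 := pow_succ 2 (2*m+2)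
      have hp : (0:ℝ) < ((2:ℝ)^(2*m+2))⁻¹ := by positivity
      rw [h1, h2, mul_inv]
      linarith
    linarith [hbound, hfin]
  · intro j k
    rw [MultNet.aprod_eq m hm (2*m+3) (le_refl _) j k]
    rw [MultNet.RwF m (le_refl _)]
    have hj0 : (j:ℕ) = 0 := by
      have h1 : MultNet.pfun m (2*m+3+1) = 1 := MultNet.pfun_last m
      have h2 := j.isLt
      omega
    rw [hj0, MultNet.ch5_at0]
    obtain ⟨kv, hk⟩ := k
    have hk3 : kv < 3 := by rw [MultNet.pfun_zero m] at hk; exact hk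
    have hkv : ((⟨kv, hk⟩ : Fin (MultNet.pfun m 0)) : ℕ) = kv := rfl
    rw [hkv]
    interval_cases kv
    · rw [MultNet.co3_at0, if_pos rfl, MultNet.PP_eq_S]
      unfold MultNet.S
      ring
    · rw [MultNet.co3_at1, if_neg (by omega)]
      exact MultNet.QQ2 m
    · rw [MultNet.co3_at2, if_neg (by omega)]
      exact MultNet.QQ2 m
end
end
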